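/- Let q, f ∈ ℝ³ with ‖q‖ = 1 and f · q = 0, and let F be the Cayley transform of f. Then q × (F q) = (2/(1 + f·f)) f. -/

import Mathlib

/-!
Since `1 + f̂ = 2 - (1 - f̂)`, the Cayley transform is `F = 2 (1 - f̂)⁻¹ - 1`. The BAC-CAB rule
`f × (f × q) = (f·q) f - (f·f) q` shows that `(1 - f̂)⁻¹ q = (q + f × q + (f·q) f) / (1 + f·f)`.
For a unit vector `q ⊥ f` the only surviving term of `q × F q` is `2 q × (f × q) / (1 + f·f)`,
and `q × (f × q) = f`.
-/

open Matrix

/-- The hat map: `hat q` is the skew matrix with `(hat q).mulVec v = q ×₃ v`. -/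
def hat (q : Fin 3 → ℝ) : Matrix (Fin 3) (Fin 3) ℝ :=
  !![0, -q 2, q 1; q 2, 0, -q 0; -q 1, q 0, 0]

/-- The Cayley transform of `f ∈ ℝ³`. -/
noncomputable def cayley (f : Fin 3 → ℝ) : Matrix (Fin 3) (Fin 3) ℝ :=
  (1 + hat f) * (1 - hat f)⁻¹

theorem hat_mulVec (f v : Fin 3 → ℝ) : hat f *ᵥ v = f ⨯₃ v := by
  ext i
  fin_cases i <;> simp [hat, cross_apply, mulVec, vecHead, vecTail] <;> ring

theorem det_one_sub_hat (f : Fin 3 → ℝ) : (1 - hat f).det = 1 + f ⬝ᵥ f := by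
  simp [det_fin_three, hat, dotProduct, Fin.sum_univ_three, one_apply]
  ring

theorem one_add_dotProduct_self_pos {n : Type*} [Fintype n] (f : n → ℝ) : 0 < 1 + f ⬝ᵥ f := by
  have : 0 ≤ f ⬝ᵥ f := Finset.sum_nonneg fun i _ => mul_self_nonneg (f i)
  linarith

theorem isUnit_det_one_sub_hat (f : Fin 3 → ℝ) : IsUnit (1 - hat f).det := by
  rw [det_one_sub_hat]
  exact (one_add_dotProduct_self_pos f).ne'.isUnit

theorem one_sub_hat_mulVec (f q : Fin 3 → ℝ) :
    (1 - hat f) *ᵥ (q + f ⨯₃ q + (f ⬝ᵥ q) • f) = (1 + f ⬝ᵥ f) • q := by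
  rw [sub_mulVec, one_mulVec, hat_mulVec, map_add, map_add, map_smul, cross_self,
    cross_cross_eq_smul_sub_smul']
  module

theorem inv_one_sub_hat_mulVec (f q : Fin 3 → ℝ) :
    (1 - hat f)⁻¹ *ᵥ q = (1 + f ⬝ᵥ f)⁻¹ • (q + f ⨯₃ q + (f ⬝ᵥ q) • f) := by
  have hc := (one_add_dotProduct_self_pos f).ne'
  have hsolve : (1 - hat f) *ᵥ ((1 + f ⬝ᵥ f)⁻¹ • (q + f ⨯₃ q + (f ⬝ᵥ q) • f)) = q := by
    rw [mulVec_smul, one_sub_hat_mulVec, smul_smul, inv_mul_cancel₀ hc, one_smul]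
  rw [← hsolve, mulVec_mulVec, nonsing_inv_mul _ (isUnit_det_one_sub_hat f), one_mulVec, hsolve]

theorem cayley_eq (f : Fin 3 → ℝ) : cayley f = (2 : ℝ) • (1 - hat f)⁻¹ - 1 := by
  rw [cayley, show 1 + hat f = (2 : ℝ) • 1 - (1 - hat f) by module, sub_mul, smul_mul_assoc,
    one_mul, mul_nonsing_inv _ (isUnit_det_one_sub_hat f)]

theorem cayley_mulVec (f q : Fin 3 → ℝ) :
    cayley f *ᵥ q = (2 / (1 + f ⬝ᵥ f)) • (q + f ⨯₃ q + (f ⬝ᵥ q) • f) - q := by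
  rw [cayley_eq, sub_mulVec, one_mulVec, smul_mulVec, inv_one_sub_hat_mulVec, smul_smul,
    div_eq_mul_inv]

theorem stmt15 (q f : Fin 3 → ℝ) (hq : q ⬝ᵥ q = 1) (hfq : f ⬝ᵥ q = 0) :
    crossProduct q ((cayley f).mulVec q) = (2 / (1 + f ⬝ᵥ f)) • f := by
  have hqfq : q ⨯₃ (f ⨯₃ q) = f := by
    rw [cross_cross_eq_smul_sub_smul', hq, hfq, one_smul, zero_smul, sub_zero]
  rw [cayley_mulVec, hfq, zero_smul, add_zero, map_sub, map_smul, map_add, cross_self, hqfq]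
  module
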